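/- Let X be a non-deterministic infinite exchangeable sequence of {0,1}-valued random variables and fix n ≥ 2. Then the following two conditions are equivalent: (i) for every z = 0,…,n−1, Σ_{k = max(0, z−1)}^{min(z, n−2)} (−1)^k C(n−2, k) Σ_{m=0}^{2} (−1)^m C(2, m) P^n_{n+1}(0^(m+z) | 0^(m+k)) = 0; (ii) for every p = 0,…,n−2, P^n_{n+1}(0^(p+2) | 0^(p+2)) − 2·P^n_{n+1}(0^(p+1) | 0^(p+1)) + P^n_{n+1}(0^(p) | 0^(p)) = 0. -/

import Mathlib

open MeasureTheory

namespace HoeffdingUrn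

variable {Ω : Type} [MeasurableSpace Ω]

/-- `X` is an exchangeable sequence under `μ`: each `X i` is measurable and, for every `n`
and every permutation `π` of `{0,…,n-1}`, the law of `(X_{π 0},…,X_{π (n-1)})` coincides with
the law of `(X_0,…,X_{n-1})`. -/
def Exchangeable {D : Type} [MeasurableSpace D] (X : ℕ → Ω → D) (μ : Measure Ω) : Prop :=
  (∀ i, Measurable (X i)) ∧
  ∀ (n : ℕ) (π : Equiv.Perm (Fin n)),
    Measure.map (fun ω (i : Fin n) => X ((π i : Fin n) : ℕ) ω) μ =
      Measure.map (fun ω (i : Fin n) => X (i : ℕ) ω) μ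

/-- probability that the first `n` variables equal the vector `x`. -/
noncomputable def cylProb {D : Type} (X : ℕ → Ω → D) (μ : Measure Ω) {n : ℕ}
    (x : Fin n → D) : ℝ :=
  (μ {ω | ∀ i : Fin n, X (i : ℕ) ω = x i}).toReal

/-- `X` is non-deterministic: every finite configuration has positive probability. -/
def NonDeterministic {D : Type} (X : ℕ → Ω → D) (μ : Measure Ω) : Prop :=
  ∀ n : ℕ, 1 ≤ n → ∀ x : Fin n → D, 0 < cylProb X μ x

/-- the canonical vector of `{0,1}ⁿ` (with `false` = 0) containing exactly `j` zeros. -/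
def zeroVec (n j : ℕ) : Fin n → Bool := fun i => decide (j ≤ (i : ℕ))

/-- number of zeros (`false` entries) in a Boolean vector. -/
def zeroCountVec {n : ℕ} (x : Fin n → Bool) : ℕ :=
  (Finset.univ.filter fun i => x i = false).card

/-- `P_n(0^{(j)})`: the common probability of any configuration of `(X_1,…,X_n)` with
exactly `j` zeros. -/
noncomputable def Pz (X : ℕ → Ω → Bool) (μ : Measure Ω) (n j : ℕ) : ℝ :=
  cylProb X μ (zeroVec n j)

/-- number of zeros among the first `n` variables. -/
def zeroCount (X : ℕ → Ω → Bool) (n : ℕ) (ω : Ω) : ℕ :=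
  zeroCountVec (fun i : Fin n => X (i : ℕ) ω)

/-- `P^n_{n+v}(0^{(b)} ∣ 0^{(a)})`: conditional probability that `(X_1,…,X_{n+v})`
contains exactly `b` zeros given that `(X_1,…,X_n)` contains exactly `a` zeros. -/
noncomputable def condP (X : ℕ → Ω → Bool) (μ : Measure Ω) (n v b a : ℕ) : ℝ :=
  (μ {ω | zeroCount X (n + v) ω = b ∧ zeroCount X n ω = a}).toReal /
    (μ {ω | zeroCount X n ω = a}).toReal

/-- a symmetric function of `k` variables. -/
def SymmFun {D : Type} {k : ℕ} (φ : (Fin k → D) → ℝ) : Prop :=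
  ∀ (π : Equiv.Perm (Fin k)) (x : Fin k → D), φ (x ∘ π) = φ x

open Classical in
/-- the symmetric `U`-statistic with kernel `φ` of order `k`, based on `(X_1,…,X_n)`:
`F = ∑_{1 ≤ j₁ < … < j_k ≤ n} φ(X_{j₁},…,X_{j_k})`. -/
noncomputable def Ustat {D : Type} (X : ℕ → Ω → D) (n : ℕ) {k : ℕ}
    (φ : (Fin k → D) → ℝ) : Ω → ℝ :=
  fun ω => ∑ j : Fin k → Fin n, if StrictMono j then φ (fun i => X ((j i : Fin n) : ℕ) ω) else 0

/-- complete degeneracy of the kernel `φ` of order `k`: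
`E[φ(X_1,…,X_k) ∣ X_2,…,X_k] = 0` a.s. -/
def Degenerate {D : Type} [MeasurableSpace D] (X : ℕ → Ω → D) (μ : Measure Ω) {k : ℕ}
    (φ : (Fin k → D) → ℝ) : Prop :=
  μ[(fun ω => φ (fun i => X (i : ℕ) ω)) |
      MeasurableSpace.comap (fun ω (i : Fin (k - 1)) => X ((i : ℕ) + 1) ω) inferInstance]
    =ᵐ[μ] 0

/-- `X` is Hoeffding decomposable: for every `n ≥ 2` and `1 ≤ k ≤ n`, a symmetric
`U`-statistic of order `k` based on `(X_1,…,X_n)` is orthogonal to `SU_{k-1}(X_{[n]})`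
(equivalently, lies in `SH_k(X_{[n]})`) if and only if its kernel is completely degenerate. -/
def HoeffdingDecomposable {D : Type} [MeasurableSpace D] (X : ℕ → Ω → D) (μ : Measure Ω) :
    Prop :=
  ∀ n : ℕ, 2 ≤ n → ∀ k : ℕ, 1 ≤ k → k ≤ n → ∀ φ : (Fin k → D) → ℝ, SymmFun φ →
    ((∀ ψ : (Fin (k - 1) → D) → ℝ, SymmFun ψ →
        ∫ ω, Ustat X n φ ω * Ustat X n ψ ω ∂μ = 0) ↔ Degenerate X μ φ)

/-- the symmetric Hoeffding spaces `SH_k(X_{[n]})`, `n ≥ 2`, `1 ≤ k ≤ n`, are all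
non-trivial: each contains a `U`-statistic which is not a.s. zero. -/
def SHNontrivial {D : Type} (X : ℕ → Ω → D) (μ : Measure Ω) : Prop :=
  ∀ n : ℕ, 2 ≤ n → ∀ k : ℕ, 1 ≤ k → k ≤ n →
    ∃ φ : (Fin k → D) → ℝ, SymmFun φ ∧
      (∀ ψ : (Fin (k - 1) → D) → ℝ, SymmFun ψ →
        ∫ ω, Ustat X n φ ω * Ustat X n ψ ω ∂μ = 0) ∧
      ∫ ω, (Ustat X n φ ω) ^ 2 ∂μ ≠ 0

/-- canonical symmetrization of a function of `m` variables. -/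
noncomputable def symmetrize {D : Type} {m : ℕ} (f : (Fin m → D) → ℝ) : (Fin m → D) → ℝ :=
  fun x => (∑ π : Equiv.Perm (Fin m), f (x ∘ π)) / (Nat.factorial m : ℝ)

/-- the vector `(y_1,…,y_u,x_1,…,x_{n-u})` of length `n` (for `1 ≤ u ≤ n`). -/
noncomputable def headTail {D : Type} [Nonempty D] (u n : ℕ) (y : Fin u → D)
    (x : Fin (n - 1) → D) : Fin n → D :=
  fun i =>
    if h : (i : ℕ) < u then y ⟨i, h⟩
    else if h2 : (i : ℕ) - u < n - 1 then x ⟨(i : ℕ) - u, h2⟩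
    else Classical.arbitrary D

/-- `[T]^{(n-u)}_{n,n-1}`: the (version of the) conditional expectation
`E[T(X_1,…,X_n) ∣ X_{u+1},…,X_{u+n-1}]`, viewed as a function on `D^{n-1}`. -/
noncomputable def condProj {D : Type} [Fintype D] [Nonempty D] (X : ℕ → Ω → D)
    (μ : Measure Ω) (n u : ℕ) (T : (Fin n → D) → ℝ) : (Fin (n - 1) → D) → ℝ :=
  fun x =>
    (∑ y : Fin u → D, T (headTail u n y x) * cylProb X μ (Fin.append y x)) / cylProb X μ x

/-- `X` is weakly independent: for every `n ≥ 2`, every symmetric `T : D^n → ℝ` with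
`[T]^{(n-1)}_{n,n-1}(X_2,…,X_n) = 0` a.s. satisfies, for every `u = 2,…,n`,
`tilde-[T]^{(n-u)}_{n,n-1}(X_{u+1},…,X_{u+n-1}) = 0` a.s. -/
def WeaklyIndependent {D : Type} [Fintype D] [Nonempty D] (X : ℕ → Ω → D)
    (μ : Measure Ω) : Prop :=
  ∀ n : ℕ, 2 ≤ n → ∀ T : (Fin n → D) → ℝ, SymmFun T →
    (∀ᵐ ω ∂μ, condProj X μ n 1 T (fun i : Fin (n - 1) => X ((i : ℕ) + 1) ω) = 0) →
    ∀ u : ℕ, 2 ≤ u → u ≤ n →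
      ∀ᵐ ω ∂μ, symmetrize (condProj X μ n u T) (fun i : Fin (n - 1) => X (u + (i : ℕ)) ω) = 0

/-- `γ` is the de Finetti measure of the `{0,1}`-valued exchangeable sequence `X`. -/
def IsDeFinettiMeasure (X : ℕ → Ω → Bool) (μ : Measure Ω) (γ : Measure ℝ) : Prop :=
  IsProbabilityMeasure γ ∧ γ (Set.Icc (0 : ℝ) 1)ᶜ = 0 ∧
  ∀ (n : ℕ) (x : Fin n → Bool),
    cylProb X μ x =
      ∫ θ, θ ^ (Finset.univ.filter fun i => x i = true).card *
        (1 - θ) ^ (Finset.univ.filter fun i => x i = false).card ∂γ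

/-- the `n`-th moment of a measure on `[0,1] ⊆ ℝ`. -/
noncomputable def momentOf (γ : Measure ℝ) (n : ℕ) : ℝ := ∫ θ, θ ^ n ∂γ

/-- the Beta(a,b) distribution on `[0,1]`, with density `θ^{a-1}(1-θ)^{b-1}/B(a,b)`. -/
noncomputable def betaMeasure (a b : ℝ) : Measure ℝ :=
  (volume.restrict (Set.Ioo (0 : ℝ) 1)).withDensity fun θ =>
    ENNReal.ofReal (θ ^ (a - 1) * (1 - θ) ^ (b - 1) /
      ∫ t in Set.Ioo (0 : ℝ) 1, t ^ (a - 1) * (1 - t) ^ (b - 1))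

/-- the canonical completely degenerate kernel `φ_n^{(0)}` of order `n`:
`φ_n^{(0)}(0^{(k)}) = (-1)^k P_n(0^{(0)}) / P_n(0^{(k)})`. -/
noncomputable def phi0 (X : ℕ → Ω → Bool) (μ : Measure Ω) (n : ℕ) :
    (Fin n → Bool) → ℝ :=
  fun x => (-1 : ℝ) ^ zeroCountVec x * (Pz X μ n 0 / Pz X μ n (zeroCountVec x))

/-- `f` is separately symmetric in its first `v` and last `m - v` variables. -/
def SepSymm {m : ℕ} (v : ℕ) (f : (Fin m → Bool) → ℝ) : Prop :=
  ∀ π : Equiv.Perm (Fin m), (∀ i : Fin m, (i : ℕ) < v ↔ ((π i : Fin m) : ℕ) < v) →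
    ∀ x : Fin m → Bool, f (x ∘ π) = f x

/-- the canonical vector of `{0,1}^m` whose first `v` coordinates contain exactly `k`
zeros and whose last `m - v` coordinates contain exactly `l` zeros. -/
def blockVec (m v k l : ℕ) : Fin m → Bool :=
  fun i => if (i : ℕ) < v then decide (k ≤ (i : ℕ)) else decide (l ≤ (i : ℕ) - v)

/-- `X` is an urn process in the sense of Hill, Lane and Sudderth: there are a measurable
`f : [0,1] → [0,1]` and positive integers `r`, `b` with
`P(X_{n+1} = 1 ∣ X_1,…,X_n) = f((r + X_1 + … + X_n)/(r + b + n))` a.s. for every `n ≥ 1`. -/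
def IsUrnProcess (X : ℕ → Ω → Bool) (μ : Measure Ω) : Prop :=
  ∃ (f : ℝ → ℝ) (r b : ℕ), Measurable f ∧
    Set.MapsTo f (Set.Icc (0 : ℝ) 1) (Set.Icc (0 : ℝ) 1) ∧ 0 < r ∧ 0 < b ∧
    ∀ n : ℕ, 1 ≤ n →
      (μ[(fun ω => if X n ω = true then (1 : ℝ) else 0) |
          MeasurableSpace.comap (fun ω (i : Fin n) => X (i : ℕ) ω) inferInstance]
        =ᵐ[μ] fun ω =>
          f (((r : ℝ) + ∑ i : Fin n, (if X (i : ℕ) ω = true then (1 : ℝ) else 0)) /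
            ((r : ℝ) + (b : ℝ) + (n : ℝ))))

/-! Write `c_a := P^n_{n+1}(0^(a) ∣ 0^(a))` and `D_p := c_{p+2} - 2 c_{p+1} + c_p`. Since
`X_{n+1}` is either `0` or `1`, `P^n_{n+1}(0^(a+1) ∣ 0^(a)) = 1 - c_a`, so the inner sum of (i)
is `D_k` when `k = z` and `-D_k` when `k = z - 1`. Hence (i) at `z = 0` reads `D_0 = 0`, and at
`z = q + 1` it reads `C(n-2,q+1) D_{q+1} + C(n-2,q) D_q = 0`; as `C(n-2,q+1) ≠ 0` for
`q + 1 ≤ n - 2`, these equations say, by induction, exactly that all `D_p` vanish. -/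

section CountingZeros

variable (X : ℕ → Ω → Bool)

theorem zeroCountVec_zeroVec {n a : ℕ} (ha : a ≤ n) : zeroCountVec (zeroVec n a) = a := by
  simp only [zeroCountVec, zeroVec, decide_eq_false_iff_not, not_le]
  rw [Fin.card_filter_val_lt, min_eq_right ha]

theorem zeroCountVec_succ {n : ℕ} (x : Fin (n + 1) → Bool) :
    zeroCountVec x = zeroCountVec (Fin.init x) + if x (Fin.last n) = false then 1 else 0 := by
  rw [zeroCountVec, zeroCountVec, Finset.card_filter, Finset.card_filter, Fin.sum_univ_castSucc]
  rfl

theorem measurable_zeroCount (hX : ∀ i, Measurable (X i)) (n : ℕ) :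
    Measurable (zeroCount X n) := by
  have h : zeroCount X n = fun ω => ∑ i : Fin n, if X i ω = false then 1 else 0 := by
    funext ω
    simp only [zeroCount, zeroCountVec, Finset.card_filter]
  rw [h]
  exact Finset.measurable_sum _ fun i _ =>
    Measurable.ite (hX i (measurableSet_singleton false)) measurable_const measurable_const

variable (μ : Measure Ω)

theorem measure_zeroCount_eq_ne_zero (hnd : NonDeterministic X μ) {n a : ℕ} (hn : 1 ≤ n)
    (ha : a ≤ n) : μ {ω | zeroCount X n ω = a} ≠ 0 := by
  have hsub : {ω | ∀ i : Fin n, X i ω = zeroVec n a i} ⊆ {ω | zeroCount X n ω = a} :=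
    fun ω hω => by
      simp only [Set.mem_ofPred_eq, zeroCount, funext hω, zeroCountVec_zeroVec ha]
  have hpos : 0 < cylProb X μ (zeroVec n a) := hnd n hn (zeroVec n a)
  exact fun h0 => hpos.ne' <| by
    rw [cylProb, measure_mono_null hsub h0, ENNReal.toReal_zero]

theorem measure_zeroCount_succ_add (hX : ∀ i, Measurable (X i)) (n a : ℕ) :
    μ {ω | zeroCount X (n + 1) ω = a ∧ zeroCount X n ω = a} +
        μ {ω | zeroCount X (n + 1) ω = a + 1 ∧ zeroCount X n ω = a} =
      μ {ω | zeroCount X n ω = a} := by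
  have hsucc (ω : Ω) :
      zeroCount X (n + 1) ω = zeroCount X n ω + if X n ω = false then 1 else 0 :=
    zeroCountVec_succ _
  rw [← measure_union]
  · congr 1
    ext ω
    simp only [Set.mem_union, Set.mem_ofPred_eq, hsucc]
    split_ifs <;> omega
  · exact Set.disjoint_left.2 fun ω h₀ h₁ => by
      simp only [Set.mem_ofPred_eq] at h₀ h₁
      omega
  · exact (measurable_zeroCount X hX (n + 1) (measurableSet_singleton _)).inter
      (measurable_zeroCount X hX n (measurableSet_singleton _))

theorem condP_add_condP_succ [IsFiniteMeasure μ] (hX : ∀ i, Measurable (X i))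
    (hnd : NonDeterministic X μ) {n a : ℕ} (hn : 1 ≤ n) (ha : a ≤ n) :
    condP X μ n 1 a a + condP X μ n 1 (a + 1) a = 1 := by
  rw [condP, condP, ← add_div, ← ENNReal.toReal_add (measure_ne_top μ _) (measure_ne_top μ _),
    measure_zeroCount_succ_add X μ hX]
  exact div_self (ENNReal.toReal_ne_zero.2 ⟨measure_zeroCount_eq_ne_zero X μ hnd hn ha,
    measure_ne_top μ _⟩)

end CountingZeros

section SecondDifference

variable (X : ℕ → Ω → Bool) (μ : Measure Ω) (n : ℕ)

noncomputable def diagSecondDiff (p : ℕ) : ℝ :=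
  condP X μ n 1 (p + 2) (p + 2) - 2 * condP X μ n 1 (p + 1) (p + 1) + condP X μ n 1 p p

theorem sum_range_three_condP (z k : ℕ) :
    ∑ m ∈ Finset.range 3,
        (-1 : ℝ) ^ m * (Nat.choose 2 m : ℝ) * condP X μ n 1 (m + z) (m + k) =
      condP X μ n 1 z k - 2 * condP X μ n 1 (z + 1) (k + 1) +
        condP X μ n 1 (z + 2) (k + 2) := by
  simp only [Finset.sum_range_succ, Finset.sum_range_zero]
  norm_num [add_comm]
  ring

theorem sum_range_three_condP_self (p : ℕ) :
    ∑ m ∈ Finset.range 3,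
        (-1 : ℝ) ^ m * (Nat.choose 2 m : ℝ) * condP X μ n 1 (m + p) (m + p) =
      diagSecondDiff X μ n p := by
  rw [sum_range_three_condP, diagSecondDiff]
  ring

theorem sum_range_three_condP_succ [IsFiniteMeasure μ] (hX : ∀ i, Measurable (X i))
    (hnd : NonDeterministic X μ) (hn : 1 ≤ n) {p : ℕ} (hp : p + 2 ≤ n) :
    ∑ m ∈ Finset.range 3,
        (-1 : ℝ) ^ m * (Nat.choose 2 m : ℝ) * condP X μ n 1 (m + (p + 1)) (m + p) =
      -diagSecondDiff X μ n p := by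
  have h₀ := condP_add_condP_succ X μ hX hnd hn (a := p) (by omega)
  have h₁ := condP_add_condP_succ X μ hX hnd hn (a := p + 1) (by omega)
  have h₂ := condP_add_condP_succ X μ hX hnd hn (a := p + 2) hp
  rw [sum_range_three_condP, diagSecondDiff]
  linear_combination h₀ - 2 * h₁ + h₂

end SecondDifference

theorem choose_recurrence_iff (D : ℕ → ℝ) (N : ℕ) :
    (D 0 = 0 ∧ ∀ q ≤ N, (N.choose (q + 1) : ℝ) * D (q + 1) + N.choose q * D q = 0) ↔
      ∀ p ≤ N, D p = 0 := by
  constructor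
  · rintro ⟨h₀, hrec⟩ p hp
    induction p with
    | zero => exact h₀
    | succ q ih =>
      have hchoose : (N.choose (q + 1) : ℝ) ≠ 0 :=
        Nat.cast_ne_zero.2 (Nat.choose_ne_zero_iff.2 hp)
      have := hrec q (by omega)
      rw [ih (by omega), mul_zero, add_zero] at this
      exact (mul_eq_zero.1 this).resolve_left hchoose
  · intro h
    refine ⟨h 0 (Nat.zero_le N), fun q hq => ?_⟩
    rcases Nat.lt_or_ge N (q + 1) with hlt | hle
    · rw [Nat.choose_eq_zero_of_lt hlt, h q hq]
      simp
    · rw [h q hq, h (q + 1) hle]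
      simp

theorem sum_Icc_min_choose_eq (N a z : ℕ) (f : ℕ → ℝ) :
    ∑ k ∈ Finset.Icc a (min z N), (-1 : ℝ) ^ k * (N.choose k : ℝ) * f k =
      ∑ k ∈ Finset.Icc a z, (-1 : ℝ) ^ k * (N.choose k : ℝ) * f k := by
  refine Finset.sum_subset (Finset.Icc_subset_Icc_right (min_le_left z N)) fun k hk hkN => ?_
  have hNk : N < k := by
    simp only [Finset.mem_Icc] at hk hkN
    omega
  rw [Nat.choose_eq_zero_of_lt hNk, Nat.cast_zero, mul_zero, zero_mul]

section UStatisticRelation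

variable (X : ℕ → Ω → Bool) (μ : Measure Ω) (n : ℕ)

/-- The left-hand side of relation (i) at `z`. -/
noncomputable def uRelation (z : ℕ) : ℝ :=
  ∑ k ∈ Finset.Icc (z - 1) (min z (n - 2)),
    (-1 : ℝ) ^ k * ((n - 2).choose k : ℝ) *
      ∑ m ∈ Finset.range 3,
        (-1 : ℝ) ^ m * (Nat.choose 2 m : ℝ) * condP X μ n 1 (m + z) (m + k)

theorem uRelation_zero : uRelation X μ n 0 = diagSecondDiff X μ n 0 := by
  rw [uRelation, Nat.zero_sub, Nat.zero_min, Finset.Icc_self, Finset.sum_singleton,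
    sum_range_three_condP_self]
  simp

theorem uRelation_succ [IsFiniteMeasure μ] (hX : ∀ i, Measurable (X i))
    (hnd : NonDeterministic X μ) {q : ℕ} (hq : q + 2 ≤ n) :
    uRelation X μ n (q + 1) = (-1 : ℝ) ^ (q + 1) *
      ((n - 2).choose (q + 1) * diagSecondDiff X μ n (q + 1) +
        (n - 2).choose q * diagSecondDiff X μ n q) := by
  rw [uRelation, sum_Icc_min_choose_eq, Nat.add_sub_cancel, Finset.sum_Icc_succ_top (by omega),
    Finset.Icc_self, Finset.sum_singleton, sum_range_three_condP_self,
    sum_range_three_condP_succ X μ n hX hnd (by omega) hq]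
  ring

end UStatisticRelation

/-- equivalence of (18) and (25). For a non-deterministic infinite
exchangeable `{0,1}`-valued sequence and `n ≥ 2`, the following are equivalent:
(i) for every `z = 0,…,n-1`,
`∑_{k=max(0,z-1)}^{min(z,n-2)} (-1)^k C(n-2,k) ∑_{m=0}^{2} (-1)^m C(2,m)
   P^n_{n+1}(0^{(m+z)} ∣ 0^{(m+k)}) = 0`;
(ii) for every `p = 0,…,n-2`,
`P^n_{n+1}(0^{(p+2)} ∣ 0^{(p+2)}) − 2 P^n_{n+1}(0^{(p+1)} ∣ 0^{(p+1)}) +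
   P^n_{n+1}(0^{(p)} ∣ 0^{(p)}) = 0`. -/
theorem u_eq_two_relation_iff_difference_relation
    {Ω : Type} [MeasurableSpace Ω] (μ : Measure Ω) [IsProbabilityMeasure μ]
    (X : ℕ → Ω → Bool) (hexch : Exchangeable X μ) (hnd : NonDeterministic X μ)
    (n : ℕ) (hn : 2 ≤ n) :
    (∀ z : ℕ, z ≤ n - 1 →
      ∑ k ∈ Finset.Icc (z - 1) (min z (n - 2)),
        (-1 : ℝ) ^ k * ((n - 2).choose k : ℝ) *
          ∑ m ∈ Finset.range 3,
            (-1 : ℝ) ^ m * (Nat.choose 2 m : ℝ) * condP X μ n 1 (m + z) (m + k) = 0) ↔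
    (∀ p : ℕ, p ≤ n - 2 →
      condP X μ n 1 (p + 2) (p + 2) - 2 * condP X μ n 1 (p + 1) (p + 1) +
        condP X μ n 1 p p = 0) := by
  change (∀ z ≤ n - 1, uRelation X μ n z = 0) ↔ ∀ p ≤ n - 2, diagSecondDiff X μ n p = 0
  have hsucc (q : ℕ) (hq : q ≤ n - 2) : uRelation X μ n (q + 1) = 0 ↔
      (n - 2).choose (q + 1) * diagSecondDiff X μ n (q + 1) +
        (n - 2).choose q * diagSecondDiff X μ n q = 0 := by
    rw [uRelation_succ X μ n hexch.1 hnd (by omega), mul_eq_zero,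
      or_iff_right (pow_ne_zero _ (neg_ne_zero.2 one_ne_zero))]
  rw [← choose_recurrence_iff (diagSecondDiff X μ n), ← uRelation_zero]
  constructor
  · intro h
    exact ⟨h 0 (Nat.zero_le _), fun q hq => (hsucc q hq).1 (h (q + 1) (by omega))⟩
  · rintro ⟨h₀, hrec⟩ (_ | q) hz
    · exact h₀
    · exact (hsucc q (by omega)).2 (hrec q (by omega))

end HoeffdingUrn
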